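/- Let H be a finite-dimensional complex inner product space and let Π and Δ be orthogonal projections on H. Then the orthogonal projection onto ker Π ∩ ker Δ satisfies P_{ker Π ∩ ker Δ} = (I − Δ)[ I − (Π − ΠΔΠ)⁺ (I − Δ) ]. -/

import Mathlib

/-!
Put `Q = I - Δ` and `A = Π - ΠΔΠ`. Since `Q` is an orthogonal projection, `A = (ΠQ)(ΠQ)*`, so
`range A = range ΠQ`, while `ker Π ⊆ ker A`. The Moore–Penrose equations make `AA⁺` the identity
on `range A`, kill `ker A* = ker A`, and put `range A⁺` inside `(ker A)ᗮ ⊆ (ker Π)ᗮ = range Π`.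
For `y = Qx` this gives `ΠQA⁺y = ΠQΠA⁺y = AA⁺y = AA⁺Πy = Πy`, so `Q(I - A⁺Q)x = y - QA⁺y` lies in
`ker Π ∩ ker Δ`; and `x - Q(I - A⁺Q)x = Δx + QA⁺y` is orthogonal to `ker Π ∩ ker Δ` because
`range A⁺ ⊥ ker A`.
-/

open LinearMap

/-- The orthogonal projection onto a submodule, as an endomorphism of the ambient space. -/
noncomputable def projL {H : Type*} [NormedAddCommGroup H] [InnerProductSpace ℂ H]
    (K : Submodule ℂ H) [K.HasOrthogonalProjection] : H →ₗ[ℂ] H :=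
  K.subtype ∘ₗ (K.orthogonalProjectionOnto).toLinearMap

/-- The four Moore–Penrose equations: `B` is the Moore–Penrose pseudoinverse of `A`. -/
def IsMPInv {H : Type*} [NormedAddCommGroup H] [InnerProductSpace ℂ H]
    [FiniteDimensional ℂ H] (A B : H →ₗ[ℂ] H) : Prop :=
  A ∘ₗ B ∘ₗ A = A ∧ B ∘ₗ A ∘ₗ B = B ∧
    adjoint (A ∘ₗ B) = A ∘ₗ B ∧ adjoint (B ∘ₗ A) = B ∘ₗ A

open scoped InnerProductSpace

namespace IsMPInv

variable {H : Type*} [NormedAddCommGroup H] [InnerProductSpace ℂ H] [FiniteDimensional ℂ H]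
  {A B : H →ₗ[ℂ] H}

theorem apply_apply_of_mem_range (hB : IsMPInv A B) {v : H} (hv : v ∈ range A) :
    A (B v) = v := by
  obtain ⟨u, rfl⟩ := hv
  exact LinearMap.congr_fun hB.1 u

theorem ker_adjoint_le_ker_comp (hB : IsMPInv A B) : ker (adjoint A) ≤ ker (A ∘ₗ B) := by
  intro w hw
  rw [mem_ker, ← hB.2.2.1, adjoint_comp, comp_apply, mem_ker.1 hw, map_zero]

theorem range_le_orthogonal_ker (hB : IsMPInv A B) : range B ≤ (ker A)ᗮ := by
  rintro _ ⟨z, rfl⟩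
  rw [Submodule.mem_orthogonal]
  intro w hw
  rw [← LinearMap.congr_fun hB.2.1 z]
  change ⟪w, (B ∘ₗ A) (B z)⟫_ℂ = 0
  rw [← adjoint_inner_left, hB.2.2.2, comp_apply, mem_ker.1 hw, map_zero, inner_zero_left]

end IsMPInv

theorem ker_le_ker_sub_comp_comp {R M : Type*} [Ring R] [AddCommGroup M] [Module R M]
    {P D : M →ₗ[R] M} : ker P ≤ ker (P - P ∘ₗ D ∘ₗ P) :=
  fun w hw => by simp [mem_ker.1 hw]

theorem apply_eq_self_of_mem_orthogonal_ker {𝕜 E : Type*} [RCLike 𝕜] [NormedAddCommGroup E]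
    [InnerProductSpace 𝕜 E] [FiniteDimensional 𝕜 E] {P : E →ₗ[𝕜] E} (hP : P ∘ₗ P = P)
    (hPa : adjoint P = P) {v : E} (hv : v ∈ (ker P)ᗮ) : P v = v := by
  rw [orthogonal_ker, hPa] at hv
  obtain ⟨u, rfl⟩ := hv
  exact LinearMap.congr_fun hP u

theorem projL_eq_of_mem_of_inner_eq_zero {H : Type*} [NormedAddCommGroup H]
    [InnerProductSpace ℂ H] (K : Submodule ℂ H) [K.HasOrthogonalProjection] (T : H →ₗ[ℂ] H)
    (hT : ∀ x, T x ∈ K) (hTo : ∀ x, ∀ w ∈ K, ⟪x - T x, w⟫_ℂ = 0) : projL K = T :=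
  LinearMap.ext fun x => K.eq_starProjection_of_mem_of_inner_eq_zero (hT x) (hTo x)

section Projections

variable {H : Type*} [NormedAddCommGroup H] [InnerProductSpace ℂ H] [FiniteDimensional ℂ H]
  {P D : H →ₗ[ℂ] H}

theorem sub_comp_comp_eq_comp_adjoint (hP : P ∘ₗ P = P) (hPa : adjoint P = P)
    (hD : D ∘ₗ D = D) (hDa : adjoint D = D) :
    P - P ∘ₗ D ∘ₗ P = (P ∘ₗ (LinearMap.id - D)) ∘ₗ adjoint (P ∘ₗ (LinearMap.id - D)) := by
  have hPP : ∀ z, P (P z) = P z := LinearMap.congr_fun hP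
  have hDD : ∀ z, D (D z) = D z := LinearMap.congr_fun hD
  ext x
  simp [adjoint_comp, hPa, hDa, hPP, hDD]

theorem apply_mem_ker_inf_ker (hP : P ∘ₗ P = P) (hPa : adjoint P = P)
    (hD : D ∘ₗ D = D) (hDa : adjoint D = D) {B : H →ₗ[ℂ] H}
    (hB : IsMPInv (P - P ∘ₗ D ∘ₗ P) B) (x : H) :
    ((LinearMap.id - D) ∘ₗ (LinearMap.id - B ∘ₗ (LinearMap.id - D))) x ∈ ker P ⊓ ker D := by
  set A := P - P ∘ₗ D ∘ₗ P
  have hPP : ∀ z, P (P z) = P z := LinearMap.congr_fun hP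
  have hDD : ∀ z, D (D z) = D z := LinearMap.congr_fun hD
  have hkerA : ker P ≤ ker A := ker_le_ker_sub_comp_comp
  have hA : A = _ := sub_comp_comp_eq_comp_adjoint hP hPa hD hDa
  have hAa : adjoint A = A := by rw [hA, adjoint_comp, adjoint_adjoint]
  set y := x - D x
  have hDy : D y = 0 := by simp [y, hDD]
  have hBy : P (B y) = B y := apply_eq_self_of_mem_orthogonal_ker hP hPa
    (Submodule.orthogonal_le hkerA (hB.range_le_orthogonal_ker (mem_range_self B y)))
  have hPy : A (B (P y)) = P y := hB.apply_apply_of_mem_range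
    (by rw [hA, range_self_comp_adjoint]; exact ⟨y, by simp [hDy]⟩)
  have hAy : A (B y) = A (B (P y)) := by
    have hker : y - P y ∈ ker (adjoint A) := by rw [hAa]; apply hkerA; simp [hPP]
    simpa [sub_eq_zero] using hB.ker_adjoint_le_ker_comp hker
  have hAB : A (B y) = P (B y) - P (D (B y)) := by simp [A, hBy]
  have hT : ((LinearMap.id - D) ∘ₗ (LinearMap.id - B ∘ₗ (LinearMap.id - D))) x =
      y - (B y - D (B y)) := by
    simp only [coe_comp, Function.comp_apply, LinearMap.sub_apply, id_coe, id_eq, map_sub, y]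
    abel
  refine Submodule.mem_inf.2 ⟨?_, by simp [hT, hDy, hDD]⟩
  rw [mem_ker, hT, map_sub P y, map_sub P (B y), ← hAB, hAy, hPy, sub_self]

theorem inner_sub_apply_eq_zero (hDa : adjoint D = D) {B : H →ₗ[ℂ] H}
    (hB : IsMPInv (P - P ∘ₗ D ∘ₗ P) B) (x : H) {w : H} (hw : w ∈ ker P ⊓ ker D) :
    ⟪x - ((LinearMap.id - D) ∘ₗ (LinearMap.id - B ∘ₗ (LinearMap.id - D))) x, w⟫_ℂ = 0 := by
  set y := x - D x
  have hx : x - ((LinearMap.id - D) ∘ₗ (LinearMap.id - B ∘ₗ (LinearMap.id - D))) x =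
      D x + B y - D (B y) := by
    simp only [coe_comp, Function.comp_apply, LinearMap.sub_apply, id_coe, id_eq, map_sub, y]
    abel
  have hD0 : ∀ z, ⟪D z, w⟫_ℂ = 0 := fun z => by
    rw [← adjoint_inner_right, hDa, mem_ker.1 hw.2, inner_zero_right]
  have hB0 : ⟪B y, w⟫_ℂ = 0 := Submodule.inner_left_of_mem_orthogonal
    (ker_le_ker_sub_comp_comp hw.1) (hB.range_le_orthogonal_ker (mem_range_self B y))
  rw [hx, inner_sub_left, inner_add_left, hD0, hD0, hB0, add_zero, sub_zero]

end Projections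

/-- `P_{ker Π ∩ ker Δ} = (I − Δ)[ I − (Π − ΠΔΠ)⁺ (I − Δ) ]`. -/
theorem stmt3 {H : Type*} [NormedAddCommGroup H] [InnerProductSpace ℂ H]
    [FiniteDimensional ℂ H]
    (Pr Dl : H →ₗ[ℂ] H)
    (hPr : Pr ∘ₗ Pr = Pr) (hPra : adjoint Pr = Pr)
    (hDl : Dl ∘ₗ Dl = Dl) (hDla : adjoint Dl = Dl)
    (B : H →ₗ[ℂ] H) (hB : IsMPInv (Pr - Pr ∘ₗ Dl ∘ₗ Pr) B) :
    projL (ker Pr ⊓ ker Dl) =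
      (LinearMap.id - Dl) ∘ₗ (LinearMap.id - B ∘ₗ (LinearMap.id - Dl)) :=
  projL_eq_of_mem_of_inner_eq_zero _ _ (apply_mem_ker_inf_ker hPr hPra hDl hDla hB)
    fun x _ hw => inner_sub_apply_eq_zero hDla hB x hw
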